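/- Let ρ be a unitary representation of the finitary symmetric group S∞ of ℕ on a complex Hilbert space H, let H[α] denote the closed subspace of vectors fixed by ρ(g) for all g ∈ S∞[α], and assume that ⋃_α H[α] is dense in H. Let P[β] be the orthogonal projection of H onto H[β]. Then for every β ∈ ℕ and all v, w ∈ H, the sequence ⟨ρ(θ_j[β])v, w⟩ converges, as j → ∞, to ⟨P[β]v, w⟩; that is, the operators ρ(θ_j[β]) converge weakly to the projection P[β]. -/

import Mathlib

open scoped InnerProductSpace

/-- The finitary symmetric group of a countable set: permutations with finite support. -/
def finitarySymm (Ω : Type*) : Subgroup (Equiv.Perm Ω) where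
  carrier := {g | {x | g x ≠ x}.Finite}
  one_mem' := by simp
  mul_mem' := by
    intro a b ha hb
    refine Set.Finite.subset (ha.union hb) fun x hx => ?_
    simp only [Set.mem_setOf_eq, Equiv.Perm.mul_apply] at hx
    simp only [Set.mem_union, Set.mem_setOf_eq]
    by_cases h : b x = x
    · exact Or.inl (by simpa [h] using hx)
    · exact Or.inr h
  inv_mem' := by
    intro a ha
    refine Set.Finite.subset ha fun x hx => ?_
    simp only [Set.mem_setOf_eq] at hx ⊢
    intro h
    apply hx
    nth_rewrite 1 [← h]
    simp

/-- `S∞`, the finitary symmetric group of `ℕ`. -/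
abbrev SInf := ↥(finitarySymm ℕ)

/-- Membership in the subgroup `S∞[α]`: finitary permutations fixing every `x < α`. -/
def InSInf (α : ℕ) (g : SInf) : Prop := ∀ x < α, (g : Equiv.Perm ℕ) x = x

/-- The permutation exchanging the blocks `[β, β+j)` and `[β+j, β+2j)`. -/
def thetaFun (β j : ℕ) (x : ℕ) : ℕ :=
  if β ≤ x ∧ x < β + j then x + j
  else if β + j ≤ x ∧ x < β + 2 * j then x - j
  else x

lemma thetaFun_involutive (β j : ℕ) : Function.Involutive (thetaFun β j) := by
  intro x
  unfold thetaFun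
  split_ifs <;> omega

/-- `θ_j[β]` as a permutation of `ℕ`. -/
def thetaPerm (β j : ℕ) : Equiv.Perm ℕ :=
  Function.Involutive.toPerm _ (thetaFun_involutive β j)

lemma thetaPerm_finitary (β j : ℕ) : thetaPerm β j ∈ finitarySymm ℕ := by
  refine Set.Finite.subset (Set.finite_Iio (β + 2 * j)) fun x hx => ?_
  simp only [Set.mem_setOf_eq, thetaPerm, Function.Involutive.coe_toPerm, thetaFun] at hx
  simp only [Set.mem_Iio]
  by_contra h
  apply hx
  split_ifs <;> omega

/-- `θ_j[β]` as an element of `S∞`. -/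
def thetaEl (β j : ℕ) : SInf := ⟨thetaPerm β j, thetaPerm_finitary β j⟩

/-- The subspace `H[α]` of vectors fixed by all operators `ρ(g)`, `g ∈ S∞[α]`. -/
def fixedSet {H : Type*} [NormedAddCommGroup H] [InnerProductSpace ℂ H] [CompleteSpace H]
    (ρ : SInf →* unitary (H →L[ℂ] H)) (α : ℕ) : Set H :=
  {v | ∀ g : SInf, InSInf α g → (ρ g : H →L[ℂ] H) v = v}

/-- `P` is the orthogonal projection of `H` onto `H[δ]`: it takes values in `H[δ]` and
`v - P v` is orthogonal to `H[δ]`. -/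
def IsProjOntoFixed {H : Type*} [NormedAddCommGroup H] [InnerProductSpace ℂ H]
    [CompleteSpace H] (ρ : SInf →* unitary (H →L[ℂ] H)) (δ : ℕ) (P : H →L[ℂ] H) : Prop :=
  ∀ v : H, P v ∈ fixedSet ρ δ ∧ ∀ w ∈ fixedSet ρ δ, ⟪v - P v, w⟫_ℂ = 0


/-!
For `v, w ∈ H[δ]` the coefficient `⟪ρ(h) v, w⟫` only depends on the double coset
`S∞[δ] h S∞[δ]`, and every permutation fixing `[0, β)` and moving `[β, δ)` out of `[0, δ)` lies in
the double coset of `θ_l[β]` for all large `l`. Hence `⟪ρ(θ_j[β]) v, w⟫` is constant once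
`j ≥ δ - β`, and the translates `ρ(θ_{j_n}[β]) w` along widely separated `j_n` have a Gram matrix
that is constant off the diagonal. Their Cesàro means therefore converge, to a vector of `H[β]`
whose pairing with `v` identifies that constant as `⟪P v, w⟫`. Since all `ρ(g)` are unitary, the
convergence extends from the dense set `⋃ H[α]` to all of `H`.
-/

open Filter Topology Finset
open scoped NNReal

theorem Dense.tendsto_of_lipschitzWith {ι α β : Type*} [PseudoMetricSpace α]
    [PseudoMetricSpace β] {l : Filter ι} {F : ι → α → β} {f : α → β} {K : ℝ≥0}
    (hF : ∀ i, LipschitzWith K (F i)) (hf : Continuous f) {D : Set α} (hD : Dense D)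
    (hconv : ∀ x ∈ D, Tendsto (F · x) l (𝓝 (f x))) (x : α) :
    Tendsto (F · x) l (𝓝 (f x)) :=
  closure_minimal hconv
    ((LipschitzWith.uniformEquicontinuous F K hF).equicontinuous.isClosed_setOfPred_tendsto hf)
    (hD x)

section Cesaro

/-- Junk value `cesaroMean z 0 = 0`. -/
noncomputable def cesaroMean {E : Type*} [AddCommGroup E] [Module ℝ E] (z : ℕ → E) (n : ℕ) : E :=
  (n⁻¹ : ℝ) • ∑ i ∈ range n, z i

theorem ContinuousLinearMap.map_eq_of_tendsto_cesaroMean {E F : Type*} [NormedAddCommGroup E]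
    [NormedSpace ℝ E] [NormedAddCommGroup F] [NormedSpace ℝ F] (L : E →L[ℝ] F) {z : ℕ → E}
    {ζ : E} (hζ : Tendsto (cesaroMean z) atTop (𝓝 ζ)) {y : F}
    (hy : Tendsto (fun n => L (z n)) atTop (𝓝 y)) : L ζ = y := by
  have hmap : (fun n => L (cesaroMean z n)) = cesaroMean (fun n => L (z n)) := by
    ext n
    simp only [cesaroMean, map_smul, map_sum]
  refine tendsto_nhds_unique ((L.continuous.tendsto ζ).comp hζ) ?_
  rw [Function.comp_def, hmap]
  exact hy.cesaro_smul

variable {𝕜 E : Type*} [RCLike 𝕜] [NormedAddCommGroup E] [InnerProductSpace 𝕜 E]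

theorem inner_sum_range_sum_range_of_inner_eq {z : ℕ → E} {c d : 𝕜}
    (hoff : ∀ a b, a ≠ b → ⟪z a, z b⟫_𝕜 = c) (hdiag : ∀ a, ⟪z a, z a⟫_𝕜 = d) (N M : ℕ) :
    ⟪∑ a ∈ range N, z a, ∑ b ∈ range M, z b⟫_𝕜 = N * M * c + (min N M : ℕ) * (d - c) := by
  have hrow : ∀ a, ⟪z a, ∑ b ∈ range M, z b⟫_𝕜 = M * c + if a < M then d - c else 0 := by
    intro a
    have hentry : ∀ b, ⟪z a, z b⟫_𝕜 = c + if a = b then d - c else 0 := by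
      intro b
      split_ifs with hab
      · rw [← hab, hdiag]; ring
      · rw [hoff a b hab, add_zero]
    simp [inner_sum, hentry, sum_add_distrib]
  have hfilter : (range N).filter (· < M) = range (min N M) := by
    ext a; simp
  simp only [sum_inner, hrow, sum_add_distrib, sum_const, card_range, nsmul_eq_mul, ← sum_filter,
    hfilter]
  ring

variable [NormedSpace ℝ E] [IsScalarTower ℝ 𝕜 E]

theorem inner_cesaroMean_sub_self_of_inner_eq {z : ℕ → E} {c d : 𝕜}
    (hoff : ∀ a b, a ≠ b → ⟪z a, z b⟫_𝕜 = c) (hdiag : ∀ a, ⟪z a, z a⟫_𝕜 = d) {K n : ℕ}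
    (hK : 0 < K) (hKn : K ≤ n) :
    ⟪cesaroMean z K - cesaroMean z n, cesaroMean z K - cesaroMean z n⟫_𝕜
      = (d - c) * ((K : 𝕜)⁻¹ - (n : 𝕜)⁻¹) := by
  have hK' : (K : 𝕜) ≠ 0 := by exact_mod_cast hK.ne'
  have hn' : (n : 𝕜) ≠ 0 := by exact_mod_cast (hK.trans_le hKn).ne'
  simp only [cesaroMean, RCLike.real_smul_eq_coe_smul (K := 𝕜), inner_sub_sub_self,
    inner_smul_left, inner_smul_right, RCLike.conj_ofReal,
    inner_sum_range_sum_range_of_inner_eq hoff hdiag, min_self, min_eq_left hKn,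
    min_eq_right hKn]
  push_cast
  field_simp
  ring

theorem cauchySeq_cesaroMean_of_inner_eq {z : ℕ → E} {c d : 𝕜}
    (hoff : ∀ a b, a ≠ b → ⟪z a, z b⟫_𝕜 = c) (hdiag : ∀ a, ⟪z a, z a⟫_𝕜 = d) :
    CauchySeq (cesaroMean z) := by
  refine (cauchySeq_shift 1).mp (cauchySeq_of_le_tendsto_0' (fun K : ℕ => √(‖d - c‖ / (K + 1)))
    (fun K n hKn => ?_) ?_)
  · have hinv : ((K + 1 : ℕ) : 𝕜)⁻¹ - ((n + 1 : ℕ) : 𝕜)⁻¹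
        = (((K + 1 : ℝ))⁻¹ - ((n + 1 : ℝ))⁻¹ : ℝ) := by
      push_cast; rfl
    have hle : |((K + 1 : ℝ))⁻¹ - ((n + 1 : ℝ))⁻¹| ≤ ((K + 1 : ℝ))⁻¹ := by
      have : ((n + 1 : ℝ))⁻¹ ≤ ((K + 1 : ℝ))⁻¹ := by gcongr
      rw [abs_of_nonneg (by linarith)]
      linarith [inv_nonneg.mpr (by positivity : (0 : ℝ) ≤ n + 1)]
    rw [dist_eq_norm, @norm_eq_sqrt_re_inner 𝕜, inner_cesaroMean_sub_self_of_inner_eq hoff hdiag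
      K.succ_pos (by omega), hinv]
    refine Real.sqrt_le_sqrt ((RCLike.re_le_norm _).trans ?_)
    rw [norm_mul, RCLike.norm_ofReal, div_eq_mul_inv]
    exact mul_le_mul_of_nonneg_left hle (norm_nonneg _)
  · simpa using (tendsto_const_div_atTop_nhds_zero_nat ‖d - c‖).comp (tendsto_add_atTop_nat 1)
      |>.sqrt

end Cesaro

section Permutations

@[simp]
theorem thetaEl_apply (β j x : ℕ) : (thetaEl β j : Equiv.Perm ℕ) x = thetaFun β j x := rfl

theorem thetaEl_mul_self (β j : ℕ) : thetaEl β j * thetaEl β j = 1 :=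
  Subtype.ext <| Equiv.ext <| thetaFun_involutive β j

theorem inSInf_thetaEl (β j : ℕ) : InSInf β (thetaEl β j) := by
  intro x hx
  simp only [thetaEl_apply, thetaFun]
  split_ifs <;> omega

theorem InSInf.mono {α α' : ℕ} {g : SInf} (hg : InSInf α' g) (h : α ≤ α') : InSInf α g :=
  fun x hx => hg x (hx.trans_le h)

theorem exists_apply_eq_self_of_le (g : SInf) : ∃ B, ∀ x, B ≤ x → (g : Equiv.Perm ℕ) x = x := by
  obtain ⟨b, hb⟩ := g.2.bddAbove
  exact ⟨b + 1, fun x hx => by_contra fun hgx => absurd (hb hgx) (by omega)⟩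

/-- Exchanges `p x` and `x + l` for `β ≤ x < δ`. -/
def blockSwap (p : Equiv.Perm ℕ) (β δ l y : ℕ) : ℕ :=
  if β + l ≤ y ∧ y < δ + l then p (y - l)
  else if β ≤ p.symm y ∧ p.symm y < δ then p.symm y + l
  else y

section BlockSwap

variable {p : Equiv.Perm ℕ} {β δ l : ℕ}

theorem blockSwap_apply_perm {x : ℕ} (hx : β ≤ x ∧ x < δ) (hpx : p x < β + l) :
    blockSwap p β δ l (p x) = x + l := by
  simp only [blockSwap, Equiv.symm_apply_apply]
  rw [if_neg (by omega), if_pos hx]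

theorem blockSwap_involutive (hp : ∀ x, β ≤ x → x < δ → p x < β + l) :
    Function.Involutive (blockSwap p β δ l) := by
  intro y
  by_cases h₁ : β + l ≤ y ∧ y < δ + l
  · have hy : blockSwap p β δ l y = p (y - l) := if_pos h₁
    rw [hy, blockSwap_apply_perm (by omega) (hp _ (by omega) (by omega))]
    omega
  by_cases h₂ : β ≤ p.symm y ∧ p.symm y < δ
  · have hy : blockSwap p β δ l y = p.symm y + l := by simp only [blockSwap, if_neg h₁, if_pos h₂]
    rw [hy]
    simp only [blockSwap, if_pos (show β + l ≤ p.symm y + l ∧ p.symm y + l < δ + l by omega),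
      Nat.add_sub_cancel, Equiv.apply_symm_apply]
  · have hy : blockSwap p β δ l y = y := by simp only [blockSwap, if_neg h₁, if_neg h₂]
    rw [hy, hy]

theorem blockSwap_eq_self_of_lt (hp : ∀ x, β ≤ x → x < δ → δ ≤ p x) (hδl : δ ≤ β + l) {y : ℕ}
    (hy : y < δ) : blockSwap p β δ l y = y := by
  have h₂ : ¬(β ≤ p.symm y ∧ p.symm y < δ) := fun h => by
    have := hp _ h.1 h.2
    rw [Equiv.apply_symm_apply] at this
    omega
  simp only [blockSwap, if_neg (show ¬(β + l ≤ y ∧ y < δ + l) by omega), if_neg h₂]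

theorem blockSwap_finite (hp : ∀ x, β ≤ x → x < δ → p x < β + l) :
    {y | blockSwap p β δ l y ≠ y}.Finite := by
  refine (Set.finite_Iio (β + δ + l)).subset fun y hy => ?_
  by_contra hyb
  simp only [Set.mem_Iio] at hyb
  have h₂ : ¬(β ≤ p.symm y ∧ p.symm y < δ) := fun h => by
    have := hp _ h.1 h.2
    rw [Equiv.apply_symm_apply] at this
    omega
  exact hy (by simp only [blockSwap, if_neg (show ¬(β + l ≤ y ∧ y < δ + l) by omega), if_neg h₂])

end BlockSwap

theorem exists_eq_mul_thetaEl_mul {β δ l : ℕ} (hδl : δ ≤ β + l) (h : SInf)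
    (hfix : ∀ x < β, (h : Equiv.Perm ℕ) x = x)
    (hge : ∀ x, β ≤ x → x < δ → δ ≤ (h : Equiv.Perm ℕ) x)
    (hlt : ∀ x, β ≤ x → x < δ → (h : Equiv.Perm ℕ) x < β + l) :
    ∃ σ τ : SInf, InSInf δ σ ∧ InSInf δ τ ∧ h = σ * thetaEl β l * τ := by
  let σ : SInf := ⟨(blockSwap_involutive hlt).toPerm, blockSwap_finite hlt⟩
  have hσ : ∀ y, (σ : Equiv.Perm ℕ) y = blockSwap h β δ l y := fun _ => rfl
  have hσδ : InSInf δ σ := fun y hy => blockSwap_eq_self_of_lt hge hδl hy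
  refine ⟨σ, thetaEl β l * σ * h, hσδ, fun x hx => ?_, ?_⟩
  · show thetaFun β l ((σ : Equiv.Perm ℕ) ((h : Equiv.Perm ℕ) x)) = x
    by_cases hxβ : x < β
    · rw [hfix x hxβ, hσδ x hx]
      simp only [thetaFun]
      split_ifs <;> omega
    · rw [hσ, blockSwap_apply_perm (by omega) (hlt x (by omega) hx)]
      simp only [thetaFun]
      split_ifs <;> omega
  · have hσσ : σ * σ = 1 := Subtype.ext <| Equiv.ext <| blockSwap_involutive hlt
    calc h = σ * (thetaEl β l * thetaEl β l) * σ * h := by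
          rw [thetaEl_mul_self, mul_one, hσσ, one_mul]
      _ = σ * thetaEl β l * (thetaEl β l * σ * h) := by group

end Permutations

section Representation

variable {H : Type*} [NormedAddCommGroup H] [InnerProductSpace ℂ H] [CompleteSpace H]
  (ρ : SInf →* unitary (H →L[ℂ] H))

theorem rho_mul_apply (g h : SInf) (x : H) :
    (ρ (g * h) : H →L[ℂ] H) x = (ρ g : H →L[ℂ] H) ((ρ h : H →L[ℂ] H) x) := by
  rw [map_mul]; rfl

theorem rho_thetaEl_rho_thetaEl (β j : ℕ) (x : H) :
    (ρ (thetaEl β j) : H →L[ℂ] H) ((ρ (thetaEl β j) : H →L[ℂ] H) x) = x := by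
  rw [← rho_mul_apply, thetaEl_mul_self, map_one]; rfl

theorem inner_rho_thetaEl_left (β j : ℕ) (x y : H) :
    ⟪(ρ (thetaEl β j) : H →L[ℂ] H) x, y⟫_ℂ = ⟪x, (ρ (thetaEl β j) : H →L[ℂ] H) y⟫_ℂ := by
  conv_lhs => rw [← rho_thetaEl_rho_thetaEl ρ β j y]
  exact Unitary.inner_map_map _ _ _

theorem fixedSet_mono {α α' : ℕ} (h : α ≤ α') : fixedSet ρ α ⊆ fixedSet ρ α' :=
  fun _ hv g hg => hv g (hg.mono h)

theorem inner_rho_mul_mul_of_mem_fixedSet {δ : ℕ} {σ τ : SInf} (hσ : InSInf δ σ)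
    (hτ : InSInf δ τ) (g : SInf) {v w : H} (hv : v ∈ fixedSet ρ δ) (hw : w ∈ fixedSet ρ δ) :
    ⟪(ρ (σ * g * τ) : H →L[ℂ] H) v, w⟫_ℂ = ⟪(ρ g : H →L[ℂ] H) v, w⟫_ℂ := by
  conv_lhs => rw [rho_mul_apply, rho_mul_apply, hv τ hτ, ← hw σ hσ]
  exact Unitary.inner_map_map _ _ _

theorem inner_rho_eq_inner_rho_thetaEl_of_mapsTo {β δ l : ℕ} (hδl : δ ≤ β + l) (h : SInf)
    (hfix : ∀ x < β, (h : Equiv.Perm ℕ) x = x)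
    (hge : ∀ x, β ≤ x → x < δ → δ ≤ (h : Equiv.Perm ℕ) x)
    (hlt : ∀ x, β ≤ x → x < δ → (h : Equiv.Perm ℕ) x < β + l)
    {v w : H} (hv : v ∈ fixedSet ρ δ) (hw : w ∈ fixedSet ρ δ) :
    ⟪(ρ h : H →L[ℂ] H) v, w⟫_ℂ = ⟪(ρ (thetaEl β l) : H →L[ℂ] H) v, w⟫_ℂ := by
  obtain ⟨σ, τ, hσ, hτ, rfl⟩ := exists_eq_mul_thetaEl_mul hδl h hfix hge hlt
  exact inner_rho_mul_mul_of_mem_fixedSet ρ hσ hτ _ hv hw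

theorem inner_rho_eq_inner_rho_thetaEl {β δ : ℕ} (h : SInf)
    (hfix : ∀ x < β, (h : Equiv.Perm ℕ) x = x)
    (hout : ∀ x, β ≤ x → x < δ → δ ≤ (h : Equiv.Perm ℕ) x)
    {v w : H} (hv : v ∈ fixedSet ρ δ) (hw : w ∈ fixedSet ρ δ) :
    ⟪(ρ h : H →L[ℂ] H) v, w⟫_ℂ = ⟪(ρ (thetaEl β (δ - β)) : H →L[ℂ] H) v, w⟫_ℂ := by
  set B := (Finset.range δ).sup fun x => (h : Equiv.Perm ℕ) x
  have hB : ∀ x < δ, (h : Equiv.Perm ℕ) x ≤ B := fun x hx =>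
    Finset.le_sup (f := fun x => (h : Equiv.Perm ℕ) x) (Finset.mem_range.mpr hx)
  rw [inner_rho_eq_inner_rho_thetaEl_of_mapsTo ρ (l := B + 2 * δ) (by omega) h hfix hout
      (fun x _ hx => by have := hB x hx; omega) hv hw,
    inner_rho_eq_inner_rho_thetaEl_of_mapsTo ρ (l := B + 2 * δ) (by omega) (thetaEl β (δ - β))
      (fun x hx => inSInf_thetaEl β _ x hx) (fun x h₁ h₂ => ?_) (fun x h₁ h₂ => ?_) hv hw] <;>
  · simp only [thetaEl_apply, thetaFun]
    split_ifs <;> omega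

theorem inner_rho_thetaEl_eq {β δ j : ℕ} (hj : δ ≤ β + j) {v w : H} (hv : v ∈ fixedSet ρ δ)
    (hw : w ∈ fixedSet ρ δ) :
    ⟪(ρ (thetaEl β j) : H →L[ℂ] H) v, w⟫_ℂ = ⟪(ρ (thetaEl β (δ - β)) : H →L[ℂ] H) v, w⟫_ℂ := by
  refine inner_rho_eq_inner_rho_thetaEl ρ _ (fun x hx => inSInf_thetaEl β j x hx)
    (fun x h₁ h₂ => ?_) hv hw
  simp only [thetaEl_apply, thetaFun]
  split_ifs <;> omega

theorem inner_rho_thetaEl_rho_thetaEl {β δ a b : ℕ} (ha : δ ≤ β + a) (hb : δ ≤ β + b)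
    (hab : δ + a ≤ β + b ∨ δ + b ≤ β + a) {w : H} (hw : w ∈ fixedSet ρ δ) :
    ⟪(ρ (thetaEl β a) : H →L[ℂ] H) w, (ρ (thetaEl β b) : H →L[ℂ] H) w⟫_ℂ
      = ⟪(ρ (thetaEl β (δ - β)) : H →L[ℂ] H) w, w⟫_ℂ := by
  rw [← inner_rho_thetaEl_left, ← rho_mul_apply]
  refine inner_rho_eq_inner_rho_thetaEl ρ _ (fun x hx => ?_) (fun x h₁ h₂ => ?_) hw hw <;>
  · simp only [Subgroup.coe_mul, Equiv.Perm.mul_apply, thetaEl_apply, thetaFun]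
    split_ifs <;> omega

theorem rho_rho_thetaEl_of_inSInf {β δ j B : ℕ} {g : SInf} (hg : InSInf β g)
    (hgB : ∀ x, B ≤ x → (g : Equiv.Perm ℕ) x = x) (hBj : B ≤ β + j) (hδj : δ ≤ β + j) {w : H}
    (hw : w ∈ fixedSet ρ δ) :
    (ρ g : H →L[ℂ] H) ((ρ (thetaEl β j) : H →L[ℂ] H) w) = (ρ (thetaEl β j) : H →L[ℂ] H) w := by
  set τ := thetaEl β j * g * thetaEl β j
  have hτ : InSInf δ τ := by
    intro x hx
    simp only [τ, Subgroup.coe_mul, Equiv.Perm.mul_apply, thetaEl_apply]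
    by_cases hxβ : x < β
    · have hθx : thetaFun β j x = x := inSInf_thetaEl β j x hxβ
      rw [hθx, hg x hxβ, hθx]
    · have hθx : thetaFun β j x = x + j := by
        simp only [thetaFun]; split_ifs <;> omega
      rw [hθx, hgB _ (by omega)]
      simp only [thetaFun]; split_ifs <;> omega
  have hgθ : g * thetaEl β j = thetaEl β j * τ := by
    simp only [τ, ← mul_assoc, thetaEl_mul_self, one_mul]
  rw [← rho_mul_apply, hgθ, rho_mul_apply, hw τ hτ]

/-- The vector `ζ` is the limit of the Cesàro means of `ρ(θ_{j_n}[β]) w` along a sequence `j_n`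
whose gaps exceed `δ`: their Gram matrix is constant off the diagonal. -/
theorem exists_mem_fixedSet_inner_eq {β δ : ℕ} {w : H} (hw : w ∈ fixedSet ρ δ) :
    ∃ ζ ∈ fixedSet ρ β, ∀ u ∈ fixedSet ρ δ,
      ⟪(ρ (thetaEl β (δ - β)) : H →L[ℂ] H) u, w⟫_ℂ = ⟪u, ζ⟫_ℂ := by
  set j : ℕ → ℕ := fun n => (n + 1) * (δ + 1)
  have hj : ∀ n, n < j n ∧ δ < j n := fun n =>
    ⟨Nat.le_mul_of_pos_right _ δ.succ_pos, Nat.le_mul_of_pos_left _ n.succ_pos⟩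
  have hsep : ∀ a b, a < b → j a + δ < j b := fun a b hab => by
    have : (a + 2) * (δ + 1) ≤ (b + 1) * (δ + 1) := Nat.mul_le_mul_right _ (by omega)
    simp only [j]; linarith
  set z : ℕ → H := fun n => (ρ (thetaEl β (j n)) : H →L[ℂ] H) w
  have hoff : ∀ a b, a ≠ b → ⟪z a, z b⟫_ℂ = ⟪(ρ (thetaEl β (δ - β)) : H →L[ℂ] H) w, w⟫_ℂ :=
    fun a b hab => inner_rho_thetaEl_rho_thetaEl ρ (by linarith [hj a]) (by linarith [hj b])
      (by rcases Nat.lt_or_gt_of_ne hab with h | h <;> [left; right] <;> linarith [hsep _ _ h]) hw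
  have hdiag : ∀ a, ⟪z a, z a⟫_ℂ = ⟪w, w⟫_ℂ := fun a => Unitary.inner_map_map _ _ _
  obtain ⟨ζ, hζ⟩ := cauchySeq_tendsto_of_complete (cauchySeq_cesaroMean_of_inner_eq hoff hdiag)
  refine ⟨ζ, fun g hg => ?_, fun u hu => ?_⟩
  · obtain ⟨B, hB⟩ := exists_apply_eq_self_of_le g
    have hfix : ∀ᶠ n in atTop, 0 = ((ρ g : H →L[ℂ] H) - 1).restrictScalars ℝ (z n) :=
      eventually_atTop.2 ⟨B, fun n hn => by
        have := rho_rho_thetaEl_of_inSInf ρ (j := j n) hg hB (by linarith [hj n])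
          (by linarith [hj n]) hw
        simp [z, this]⟩
    have := (((ρ g : H →L[ℂ] H) - 1).restrictScalars ℝ).map_eq_of_tendsto_cesaroMean hζ
      (tendsto_const_nhds.congr' hfix)
    simpa [sub_eq_zero] using this
  · have hconst : ∀ n, (innerSL ℂ u).restrictScalars ℝ (z n)
        = ⟪(ρ (thetaEl β (δ - β)) : H →L[ℂ] H) u, w⟫_ℂ := fun n => by
      simp only [ContinuousLinearMap.coe_restrictScalars', innerSL_apply_apply, z,
        ← inner_rho_thetaEl_left]
      exact inner_rho_thetaEl_eq ρ (by linarith [hj n]) hu hw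
    exact (((innerSL ℂ u).restrictScalars ℝ).map_eq_of_tendsto_cesaroMean hζ
      (by simp only [hconst]; exact tendsto_const_nhds)).symm

theorem inner_rho_thetaEl_eq_inner_proj {β δ j : ℕ} {P : H →L[ℂ] H} (hP : IsProjOntoFixed ρ β P)
    (hβδ : β ≤ δ) (hj : δ ≤ β + j) {v w : H} (hv : v ∈ fixedSet ρ δ) (hw : w ∈ fixedSet ρ δ) :
    ⟪(ρ (thetaEl β j) : H →L[ℂ] H) v, w⟫_ℂ = ⟪P v, w⟫_ℂ := by
  obtain ⟨ζ, hζβ, hζ⟩ := exists_mem_fixedSet_inner_eq ρ hw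
  have hPv := (hP v).1
  calc ⟪(ρ (thetaEl β j) : H →L[ℂ] H) v, w⟫_ℂ
      = ⟪(ρ (thetaEl β (δ - β)) : H →L[ℂ] H) v, w⟫_ℂ := inner_rho_thetaEl_eq ρ hj hv hw
    _ = ⟪v, ζ⟫_ℂ := hζ v hv
    _ = ⟪P v, ζ⟫_ℂ := by rw [← sub_eq_zero, ← inner_sub_left]; exact (hP v).2 ζ hζβ
    _ = ⟪(ρ (thetaEl β (δ - β)) : H →L[ℂ] H) (P v), w⟫_ℂ :=
      (hζ _ (fixedSet_mono ρ hβδ hPv)).symm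
    _ = ⟪P v, w⟫_ℂ := by rw [hPv _ (inSInf_thetaEl β _)]

theorem lipschitzWith_inner_rho_left (g : SInf) (w : H) :
    LipschitzWith ‖w‖₊ fun v => ⟪(ρ g : H →L[ℂ] H) v, w⟫_ℂ :=
  LipschitzWith.of_dist_le_mul fun x y => by
    rw [dist_eq_norm, dist_eq_norm, ← inner_sub_left, ← map_sub, coe_nnnorm, mul_comm]
    exact (norm_inner_le_norm _ _).trans_eq (by rw [Unitary.norm_map])

theorem lipschitzWith_inner_rho_right (g : SInf) (v : H) :
    LipschitzWith ‖v‖₊ fun w => ⟪(ρ g : H →L[ℂ] H) v, w⟫_ℂ :=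
  LipschitzWith.of_dist_le_mul fun x y => by
    rw [dist_eq_norm, dist_eq_norm, ← inner_sub_right, coe_nnnorm]
    exact (norm_inner_le_norm _ _).trans_eq (by rw [Unitary.norm_map])

end Representation

/-- **Weak convergence to the projection** (Theorem 2.2(b)): for a unitary
representation of `S∞` with `⋃_α H[α]` dense, the operators `ρ(θ_j[β])` converge weakly
to the orthogonal projection `P[β]` onto `H[β]`. -/
theorem theta_tendsto_projection {H : Type*} [NormedAddCommGroup H]
    [InnerProductSpace ℂ H] [CompleteSpace H]
    (ρ : SInf →* unitary (H →L[ℂ] H))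
    (hdense : Dense (⋃ α : ℕ, fixedSet ρ α))
    (β : ℕ) (P : H →L[ℂ] H) (hP : IsProjOntoFixed ρ β P) (v w : H) :
    Filter.Tendsto (fun j : ℕ => ⟪(ρ (thetaEl β j) : H →L[ℂ] H) v, w⟫_ℂ)
      Filter.atTop (nhds ⟪P v, w⟫_ℂ) := by
  have hconv_fixed_fixed : ∀ v ∈ ⋃ α : ℕ, fixedSet ρ α, ∀ w ∈ ⋃ α : ℕ, fixedSet ρ α,
      Tendsto (fun j : ℕ => ⟪(ρ (thetaEl β j) : H →L[ℂ] H) v, w⟫_ℂ) atTop (𝓝 ⟪P v, w⟫_ℂ) := by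
    intro v hv w hw
    obtain ⟨α₁, hv⟩ := Set.mem_iUnion.mp hv
    obtain ⟨α₂, hw⟩ := Set.mem_iUnion.mp hw
    set δ := max (max α₁ α₂) β
    refine tendsto_const_nhds.congr' (eventually_atTop.2 ⟨δ, fun j hj => ?_⟩)
    exact (inner_rho_thetaEl_eq_inner_proj ρ hP (δ := δ) (by omega) (by omega)
      (fixedSet_mono ρ (by omega) hv) (fixedSet_mono ρ (by omega) hw)).symm
  have hconv_fixed : ∀ w ∈ ⋃ α : ℕ, fixedSet ρ α, ∀ v : H,
      Tendsto (fun j : ℕ => ⟪(ρ (thetaEl β j) : H →L[ℂ] H) v, w⟫_ℂ) atTop (𝓝 ⟪P v, w⟫_ℂ) :=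
    fun w hw => hdense.tendsto_of_lipschitzWith (fun _ => lipschitzWith_inner_rho_left ρ _ w)
      (P.continuous.inner continuous_const) fun v hv => hconv_fixed_fixed v hv w hw
  exact hdense.tendsto_of_lipschitzWith (fun _ => lipschitzWith_inner_rho_right ρ _ v)
    (continuous_const.inner continuous_id) (fun w hw => hconv_fixed w hw v) w
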